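/- Let ψ : ℝ≥0 → ℝ≥0 be a nondecreasing, upper semicontinuous function. Then the iterates ψⁿ(t) tend to 0 as n → ∞ for every t > 0 if and only if ψ(t) < t for every t > 0. -/

import Mathlib

/-! If ψ(t) < t for t > 0, the orbit of t > 0 decreases to its infimum L, and upper semicontinuity
forces L ≤ ψ(L), which is only possible for L = 0. Conversely, if t ≤ ψ(t) for some t > 0, then by
monotonicity the whole orbit of t stays above t. -/

open Filter Topology

section

variable {ι γ α : Type*} [TopologicalSpace α] [LinearOrder α] [DenselyOrdered α]
  [OrderClosedTopology α]

theorem UpperSemicontinuousAt.le_apply_of_tendsto [TopologicalSpace γ] {f : γ → α} {a : γ} {b : α} {l : Filter ι} [l.NeBot]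
    {u : ι → γ} (hf : UpperSemicontinuousAt f a) (hu : Tendsto u l (𝓝 a))
    (hfu : Tendsto (f ∘ u) l (𝓝 b)) : b ≤ f a := by
  by_contra! hlt
  obtain ⟨y, hfy, hyb⟩ := exists_between hlt
  have hfu_le : ∀ᶠ i in l, f (u i) ≤ y := (hu.eventually (hf y hfy)).mono fun _ => le_of_lt
  exact hyb.not_ge (le_of_tendsto hfu hfu_le)

theorem UpperSemicontinuousAt.le_apply_of_tendsto_iterate {f : α → α} {x a : α}
    (hf : UpperSemicontinuousAt f a) (h : Tendsto (fun n => f^[n] x) atTop (𝓝 a)) : a ≤ f a := by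
  refine hf.le_apply_of_tendsto h ?_
  have hshift := (tendsto_add_atTop_iff_nat 1).2 h
  simp only [Function.iterate_succ_apply'] at hshift
  exact hshift

end

theorem iterates_tendsto_zero_iff_lt_id
    (ψ : NNReal → NNReal) (hmono : Monotone ψ) (husc : UpperSemicontinuous ψ) :
    (∀ t : NNReal, 0 < t → Tendsto (fun n => ψ^[n] t) atTop (nhds 0)) ↔
      (∀ t : NNReal, 0 < t → ψ t < t) := by
  constructor
  · intro h t ht
    by_contra! hle
    have horbit : ∀ n, t ≤ ψ^[n] t := fun n =>
      hmono.monotone_iterate_of_le_map hle (Nat.zero_le n)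
    exact ht.not_ge (ge_of_tendsto (h t ht) (Eventually.of_forall horbit))
  · intro h t ht
    have hconv : Tendsto (fun n => ψ^[n] t) atTop (𝓝 (⨅ n, ψ^[n] t)) :=
      tendsto_atTop_ciInf (hmono.antitone_iterate_of_map_le (h t ht).le) (OrderBot.bddBelow _)
    have hfixed := UpperSemicontinuousAt.le_apply_of_tendsto_iterate (husc _) hconv
    obtain hL | hL := eq_zero_or_pos (⨅ n, ψ^[n] t)
    · rwa [hL] at hconv
    · exact absurd (h _ hL) hfixed.not_gt
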